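/- Assume in addition that σ is even, i.e. P σ = σ P. Then for every k ∈ ℕ, the ℂ-linear span V_k = span{ f_J† f_I : I, J finsets of Fin m with |I| + |J| ≤ k } is invariant under Φ*, i.e. for every X ∈ V_k one has Φ*(X) ∈ V_k. -/
import Mathlib


open Matrix Finset Kronecker ComplexConjugate
open scoped ComplexOrder

noncomputable section

/-- Ordered product of a family over a finset, factors in increasing index order. -/
def oprod {R : Type*} [Monoid R] {m : ℕ} (x : Fin m → R) (I : Finset (Fin m)) : R :=
  ((I.sort (· ≤ ·)).map x).prod

/-- Complex matrices indexed by `Fin (2^m)`. -/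
abbrev Mat (m : ℕ) := Matrix (Fin (2^m)) (Fin (2^m)) ℂ

/-- Complex matrices on the tensor product `ℂ^{2^m} ⊗ ℂ^{2^m}`. -/
abbrev Mat2 (m : ℕ) := Matrix (Fin (2^m) × Fin (2^m)) (Fin (2^m) × Fin (2^m)) ℂ

variable {m : ℕ}

/-- The parity operator `P = ∏_j (1 - 2 f_jᴴ f_j)`. -/
def parity (f : Fin m → Mat m) : Mat m :=
  oprod (fun j => 1 - (2:ℂ) • ((f j)ᴴ * f j)) Finset.univ

/-- Parity-trick operator `a_i = f_i ⊗ 1`. -/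
def aOp (f : Fin m → Mat m) (i : Fin m) : Mat2 m := f i ⊗ₖ (1 : Mat m)

/-- Parity-trick operator `b_i = P ⊗ f_i`. -/
def bOp (f : Fin m → Mat m) (i : Fin m) : Mat2 m := parity f ⊗ₖ f i

/-- Partial trace over the second tensor factor. -/
def ptrace2 (M : Mat2 m) : Mat m := Matrix.of fun i j => ∑ s, M (i, s) (j, s)

/-- The Heisenberg-picture map `Φ*(X) = Tr₂[(1 ⊗ σ) Uᴴ (X ⊗ 1) U]`. -/
def PhiStar (U : Mat2 m) (σ : Mat m) (X : Mat m) : Mat m :=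
  ptrace2 (((1 : Mat m) ⊗ₖ σ) * Uᴴ * (X ⊗ₖ (1 : Mat m)) * U)

/-- Environment correlation tensor `Γ_{Ξ;Ω} = Tr(σ f_Ξ† f_Ω)`. -/
def Gam (f : Fin m → Mat m) (σ : Mat m) (Ξ Ω : Finset (Fin m)) : ℂ :=
  Matrix.trace (σ * (oprod f Ξ)ᴴ * oprod f Ω)

/-- `det (A_{I×L} | B_{I×Λ})`: determinant of the square matrix whose rows are indexed
by `I` in increasing order, whose first `|L|` columns are entries of `A` with columns
from `L` in increasing order, and whose last `|Λ|` columns are entries of `B` with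
columns from `Λ` in increasing order (defined to be `0` if `|L| + |Λ| ≠ |I|`). -/
def concatDet {m : ℕ} (A B : Matrix (Fin m) (Fin m) ℂ) (I L Λ : Finset (Fin m)) : ℂ :=
  if h : L.card + Λ.card = I.card then
    Matrix.det (Matrix.of fun r c : Fin I.card =>
      Sum.elim
        (fun l => A (I.orderIsoOfFin rfl r) (L.orderIsoOfFin rfl l))
        (fun w => B (I.orderIsoOfFin rfl r) (Λ.orderIsoOfFin rfl w))
        (finSumFinEquiv.symm (Fin.cast h.symm c)))
  else 0

/-- The span of normally ordered monomials `f_J† f_I` of total order at most `k`. -/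
def monSpan (f : Fin m → Mat m) (k : ℕ) : Submodule ℂ (Mat m) :=
  Submodule.span ℂ
    {X : Mat m | ∃ I J : Finset (Fin m), I.card + J.card ≤ k ∧ X = (oprod f J)ᴴ * oprod f I}

/-- generic: product of spans lands in a submodule if generators do -/
lemma spanMulMem {A : Type*} [Ring A] [Algebra ℂ A] {S T : Set A} {W : Submodule ℂ A}
    (h : ∀ s ∈ S, ∀ t ∈ T, s * t ∈ W) :
    ∀ x ∈ Submodule.span ℂ S, ∀ y ∈ Submodule.span ℂ T, x * y ∈ W := by
  intro x hx
  induction hx using Submodule.span_induction with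
  | mem s hs =>
    intro y hy
    induction hy using Submodule.span_induction with
    | mem t ht => exact h s hs t ht
    | zero => simpa using W.zero_mem
    | add a b _ _ iha ihb => rw [mul_add]; exact W.add_mem iha ihb
    | smul c a _ iha => rw [mul_smul_comm]; exact W.smul_mem c iha
  | zero => intro y hy; simpa using W.zero_mem
  | add a b _ _ iha ihb => intro y hy; rw [add_mul]; exact W.add_mem (iha y hy) (ihb y hy)
  | smul c a _ iha => intro y hy; rw [smul_mul_assoc]; exact W.smul_mem c (iha y hy)

lemma mulSpanMem {A : Type*} [Ring A] [Algebra ℂ A] {M : A} {T : Set A} {W : Submodule ℂ A}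
    (h : ∀ t ∈ T, M * t ∈ W) : ∀ y ∈ Submodule.span ℂ T, M * y ∈ W := by
  intro y hy
  refine spanMulMem (S := {M}) (fun s hs t ht => ?_) M (Submodule.subset_span rfl) y hy
  rcases hs with rfl; exact h t ht

lemma spanMulMem' {A : Type*} [Ring A] [Algebra ℂ A] {M : A} {S : Set A} {W : Submodule ℂ A}
    (h : ∀ s ∈ S, s * M ∈ W) : ∀ y ∈ Submodule.span ℂ S, y * M ∈ W := by
  intro y hy
  exact spanMulMem (T := {M}) (fun s hs t ht => by rcases ht with rfl; exact h s hs)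
    y hy M (Submodule.subset_span rfl)

/-- sign change of products under permutations, for anticommuting families -/
lemma perm_prod (g : Fin m → Mat m) (hg : ∀ i j, g i * g j = -(g j * g i)) :
    ∀ {l l' : List (Fin m)}, l.Perm l' →
      ∃ c : ℂ, (l.map g).prod = c • (l'.map g).prod := by
  intro l l' h
  induction h with
  | nil => exact ⟨1, by simp⟩
  | cons x h ih =>
    obtain ⟨c, hc⟩ := ih
    exact ⟨c, by simp [hc, mul_smul_comm]⟩
  | swap x y l =>
    refine ⟨-1, ?_⟩
    simp only [List.map_cons, List.prod_cons, ← mul_assoc, hg y x]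
    rw [neg_one_smul ℂ, neg_mul]
  | trans h1 h2 ih1 ih2 =>
    obtain ⟨c1, hc1⟩ := ih1
    obtain ⟨c2, hc2⟩ := ih2
    exact ⟨c1 * c2, by rw [hc1, hc2, smul_smul]⟩

lemma sq_zero (g : Fin m → Mat m) (hg : ∀ i j, g i * g j = -(g j * g i)) (i : Fin m) :
    g i * g i = 0 := by
  have h := hg i i
  have h2 : g i * g i + g i * g i = 0 := by nth_rewrite 1 [h]; simp
  have h3 : (2:ℂ) • (g i * g i) = 0 := by rw [two_smul]; exact h2
  simpa using (smul_eq_zero.mp h3).resolve_left (by norm_num)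

/-- multiplying an ordered product by a generator -/
lemma ins_left (g : Fin m → Mat m) (hg : ∀ i j, g i * g j = -(g j * g i))
    (I : Finset (Fin m)) (i : Fin m) :
    ∃ (c : ℂ) (I' : Finset (Fin m)), I'.card ≤ I.card + 1 ∧
      g i * oprod g I = c • oprod g I' := by
  by_cases hi : i ∈ I
  · -- product vanishes
    have hperm : (I.sort (· ≤ ·)).Perm (i :: ((I.erase i).sort (· ≤ ·))) := by
      rw [← Multiset.coe_eq_coe, Finset.sort_eq, ← Multiset.cons_coe, Finset.sort_eq,
        Finset.erase_val, Multiset.cons_erase (by simpa using hi)]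
    obtain ⟨c, hc⟩ := perm_prod g hg hperm
    refine ⟨0, I, by omega, ?_⟩
    have : g i * oprod g I = c • (g i * (g i * (((I.erase i).sort (· ≤ ·)).map g).prod)) := by
      rw [oprod, hc]; simp [mul_smul_comm]
    rw [this, ← mul_assoc, sq_zero g hg]
    simp
  · have hperm : (i :: (I.sort (· ≤ ·))).Perm ((insert i I).sort (· ≤ ·)) := by
      rw [← Multiset.coe_eq_coe, Finset.sort_eq, ← Multiset.cons_coe, Finset.sort_eq,
        Finset.insert_val_of_notMem hi]
    obtain ⟨c, hc⟩ := perm_prod g hg hperm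
    refine ⟨c, insert i I, by simp [Finset.card_insert_of_notMem hi], ?_⟩
    simpa [oprod] using hc

/-- any product of generators sorts into ordered products -/
lemma sort_mem (g : Fin m → Mat m) (hg : ∀ i j, g i * g j = -(g j * g i)) :
    ∀ l : List (Fin m), (l.map g).prod ∈
      Submodule.span ℂ {y : Mat m | ∃ I : Finset (Fin m), I.card ≤ l.length ∧ y = oprod g I} := by
  intro l
  induction l with
  | nil =>
    exact Submodule.subset_span ⟨∅, by simp [oprod]⟩
  | cons i l ih =>
    rw [List.map_cons, List.prod_cons]
    refine mulSpanMem (fun t ht => ?_) _ ih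
    obtain ⟨I, hIc, rfl⟩ := ht
    obtain ⟨c, I', hI', hins⟩ := ins_left g hg I i
    rw [hins]
    exact Submodule.smul_mem _ _ (Submodule.subset_span ⟨I', by simp at hIc ⊢; omega, rfl⟩)




def genOp (f : Fin m → Mat m) (p : Fin m × Bool) : Mat m := if p.2 then (f p.1)ᴴ else f p.1

def IsWord (f : Fin m → Mat m) (n : ℕ) (x : Mat m) : Prop :=
  ∃ l : List (Fin m × Bool), l.length = n ∧ x = (l.map (genOp f)).prod

section CAR
variable (f : Fin m → Mat m)

lemma anti_f (hff : ∀ i j : Fin m, f i * f j + f j * f i = 0) :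
    ∀ i j, f i * f j = -(f j * f i) := fun i j => eq_neg_of_add_eq_zero_left (hff i j)

lemma anti_fd (hff : ∀ i j : Fin m, f i * f j + f j * f i = 0) :
    ∀ i j, (f i)ᴴ * (f j)ᴴ = -((f j)ᴴ * (f i)ᴴ) := by
  intro i j
  have h := congrArg conjTranspose (hff j i)
  simp only [conjTranspose_add, conjTranspose_mul, conjTranspose_zero] at h
  exact eq_neg_of_add_eq_zero_left h

lemma monSpan_mono {k k' : ℕ} (h : k ≤ k') : monSpan f k ≤ monSpan f k' :=
  Submodule.span_mono fun X ⟨I, J, hc, e⟩ => ⟨I, J, le_trans hc h, e⟩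

lemma prod_map_conj (l : List (Fin m)) :
    ((l.map f).prod)ᴴ = (l.reverse.map (fun i => (f i)ᴴ)).prod := by
  induction l with
  | nil => simp
  | cons i l ih => simp [conjTranspose_mul, ih]

/-- `oprod` of the daggered family vs dagger of `oprod`. -/
lemma oprod_dag (hff : ∀ i j : Fin m, f i * f j + f j * f i = 0) (J : Finset (Fin m)) :
    ∃ c : ℂ, oprod (fun i => (f i)ᴴ) J = c • (oprod f J)ᴴ := by
  obtain ⟨c, hc⟩ := perm_prod (fun i => (f i)ᴴ) (anti_fd f hff)
    ((J.sort (· ≤ ·)).reverse_perm).symm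
  exact ⟨c, by rw [oprod, hc, oprod, prod_map_conj]⟩

lemma ins_right (g : Fin m → Mat m) (hg : ∀ i j, g i * g j = -(g j * g i))
    (I : Finset (Fin m)) (i : Fin m) :
    ∃ (c : ℂ) (I' : Finset (Fin m)), I'.card ≤ I.card + 1 ∧
      oprod g I * g i = c • oprod g I' := by
  obtain ⟨c, hc⟩ := perm_prod g hg (List.perm_append_singleton i (I.sort (· ≤ ·)))
  obtain ⟨c', I', hI', h'⟩ := ins_left g hg I i
  refine ⟨c * c', I', hI', ?_⟩
  have h1 : oprod g I * g i = ((I.sort (· ≤ ·) ++ [i]).map g).prod := by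
    simp [oprod]
  rw [h1, hc]
  simp only [List.map_cons, List.prod_cons]
  rw [show ((I.sort (· ≤ ·)).map g).prod = oprod g I from rfl, h', smul_smul]

lemma cross (hffd : ∀ i j : Fin m, f i * (f j)ᴴ + (f j)ᴴ * f i = if i = j then 1 else 0)
    (i : Fin m) : ∀ l : List (Fin m),
    f i * (l.map (fun j => (f j)ᴴ)).prod ∈ Submodule.span ℂ
      {y : Mat m | ∃ l' : List (Fin m),
        (l'.length < l.length ∧ y = (l'.map (fun j => (f j)ᴴ)).prod) ∨
        (l'.length ≤ l.length ∧ y = (l'.map (fun j => (f j)ᴴ)).prod * f i)} := by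
  intro l
  induction l with
  | nil =>
    refine Submodule.subset_span ⟨[], Or.inr ⟨le_refl _, by simp⟩⟩
  | cons j l ih =>
    rw [List.map_cons, List.prod_cons, ← mul_assoc]
    have hij : f i * (f j)ᴴ = (if i = j then (1 : Mat m) else 0) - (f j)ᴴ * f i :=
      eq_sub_of_add_eq (hffd i j)
    rw [hij, sub_mul]
    refine Submodule.sub_mem _ ?_ ?_
    · by_cases h : i = j
      · rw [if_pos h, one_mul]
        exact Submodule.subset_span ⟨l, Or.inl ⟨by simp, rfl⟩⟩
      · simp [h]
    · rw [mul_assoc]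
      refine mulSpanMem (fun t ht => ?_) _ ih
      obtain ⟨l', hl'⟩ := ht
      rcases hl' with ⟨hlen, rfl⟩ | ⟨hlen, rfl⟩
      · exact Submodule.subset_span ⟨j :: l', Or.inl ⟨by simpa using hlen, by simp⟩⟩
      · exact Submodule.subset_span ⟨j :: l', Or.inr ⟨by simpa using hlen, by simp [mul_assoc]⟩⟩

lemma dag_sorted_mul_mem (hff : ∀ i j : Fin m, f i * f j + f j * f i = 0)
    {n : ℕ} (l' : List (Fin m)) (I' : Finset (Fin m))
    (h : l'.length + I'.card ≤ n) :
    (l'.map (fun j => (f j)ᴴ)).prod * oprod f I' ∈ monSpan f n := by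
  refine spanMulMem' (fun s hs => ?_) _ (sort_mem (fun i => (f i)ᴴ) (anti_fd f hff) l')
  obtain ⟨J'', hJc, rfl⟩ := hs
  obtain ⟨c, hc⟩ := oprod_dag f hff J''
  rw [hc, smul_mul_assoc]
  exact Submodule.smul_mem _ _ (Submodule.subset_span ⟨I', J'', by omega, rfl⟩)

lemma gen_mul_mon (hff : ∀ i j : Fin m, f i * f j + f j * f i = 0)
    (hffd : ∀ i j : Fin m, f i * (f j)ᴴ + (f j)ᴴ * f i = if i = j then 1 else 0)
    (x : Fin m × Bool) (I J : Finset (Fin m)) {n : ℕ} (hn : I.card + J.card ≤ n) :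
    genOp f x * ((oprod f J)ᴴ * oprod f I) ∈ monSpan f (n + 1) := by
  obtain ⟨i, b⟩ := x
  cases b with
  | true =>
    obtain ⟨c, J', hJ', h⟩ := ins_right f (anti_f f hff) J i
    have : genOp f (i, true) * ((oprod f J)ᴴ * oprod f I)
        = (starRingEnd ℂ c) • ((oprod f J')ᴴ * oprod f I) := by
      rw [← mul_assoc]
      have : genOp f (i, true) * (oprod f J)ᴴ = (oprod f J * f i)ᴴ := by
        simp [genOp, conjTranspose_mul]
      rw [this, h, conjTranspose_smul, smul_mul_assoc]
      rfl
    rw [this]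
    exact Submodule.smul_mem _ _ (Submodule.subset_span ⟨I, J', by omega, rfl⟩)
  | false =>
    have hgen : genOp f (i, false) = f i := rfl
    have hJd : (oprod f J)ᴴ = (((J.sort (· ≤ ·)).reverse).map (fun j => (f j)ᴴ)).prod :=
      prod_map_conj f _
    rw [hgen, ← mul_assoc, hJd]
    refine spanMulMem' (fun y hy => ?_) _ (cross f hffd i ((J.sort (· ≤ ·)).reverse))
    have hlen : ((J.sort (· ≤ ·)).reverse).length = J.card := by simp
    obtain ⟨l', hl'⟩ := hy
    rcases hl' with ⟨hl, rfl⟩ | ⟨hl, rfl⟩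
    · exact dag_sorted_mul_mem f hff l' I (by omega)
    · rw [mul_assoc]
      obtain ⟨c, I', hI', h⟩ := ins_left f (anti_f f hff) I i
      rw [h, mul_smul_comm]
      refine Submodule.smul_mem _ _ (dag_sorted_mul_mem f hff l' I' (by omega))

lemma norm_word (hff : ∀ i j : Fin m, f i * f j + f j * f i = 0)
    (hffd : ∀ i j : Fin m, f i * (f j)ᴴ + (f j)ᴴ * f i = if i = j then 1 else 0) :
    ∀ l : List (Fin m × Bool), (l.map (genOp f)).prod ∈ monSpan f l.length := by
  intro l
  induction l with
  | nil => exact Submodule.subset_span ⟨∅, ∅, by simp, by simp [oprod]⟩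
  | cons x l ih =>
    rw [List.map_cons, List.prod_cons]
    have : (x :: l).length = l.length + 1 := rfl
    rw [this]
    refine mulSpanMem (fun t ht => ?_) _ ih
    obtain ⟨I, J, hc, rfl⟩ := ht
    exact gen_mul_mon f hff hffd x I J hc

lemma word_mem_monSpan (hff : ∀ i j : Fin m, f i * f j + f j * f i = 0)
    (hffd : ∀ i j : Fin m, f i * (f j)ᴴ + (f j)ᴴ * f i = if i = j then 1 else 0)
    {n k : ℕ} {x : Mat m} (hw : IsWord f n x) (hnk : n ≤ k) : x ∈ monSpan f k := by
  obtain ⟨l, hlen, rfl⟩ := hw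
  exact monSpan_mono f (hlen ▸ hnk) (norm_word f hff hffd l)

end CAR


section Parity
variable (f : Fin m → Mat m)
  (hff : ∀ i j : Fin m, f i * f j + f j * f i = 0)
  (hffd : ∀ i j : Fin m, f i * (f j)ᴴ + (f j)ᴴ * f i = if i = j then 1 else 0)

/-- the local number-operator factors -/
def qOp : Fin m → Mat m := fun j => 1 - (2:ℂ) • ((f j)ᴴ * f j)

lemma parity_eq : parity f = ((Finset.univ.sort (· ≤ ·)).map (qOp f)).prod := rfl

lemma genOp_false (i : Fin m) : genOp f (i, false) = f i := rfl
lemma genOp_true (i : Fin m) : genOp f (i, true) = (f i)ᴴ := rfl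

lemma one_sub_smul_comm (a b : Mat m) (h : a * b = b * a) :
    (1 - (2:ℂ) • a) * (1 - (2:ℂ) • b) = (1 - (2:ℂ) • b) * (1 - (2:ℂ) • a) := by
  simp only [mul_sub, sub_mul, one_mul, mul_one, smul_mul_assoc, mul_smul_comm, h]
  module

include hff hffd

lemma ff_sq (i : Fin m) : f i * f i = 0 := sq_zero f (anti_f f hff) i

lemma fdfd_sq (i : Fin m) : (f i)ᴴ * (f i)ᴴ = 0 :=
  sq_zero (fun i => (f i)ᴴ) (anti_fd f hff) i

lemma fi_fid (i : Fin m) : f i * (f i)ᴴ = 1 - (f i)ᴴ * f i := by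
  have := hffd i i; rw [if_pos rfl] at this; exact eq_sub_of_add_eq this

lemma mixed_fd (i j : Fin m) (h : j ≠ i) : (f j)ᴴ * f i = -(f i * (f j)ᴴ) := by
  have := hffd i j; rw [if_neg (fun e => h e.symm)] at this
  exact eq_neg_of_add_eq_zero_right this

lemma n_mul_f_comm {i j : Fin m} (h : j ≠ i) :
    ((f j)ᴴ * f j) * f i = f i * ((f j)ᴴ * f j) := by
  calc ((f j)ᴴ * f j) * f i = (f j)ᴴ * (f j * f i) := by rw [mul_assoc]
    _ = -((f j)ᴴ * (f i * f j)) := by rw [anti_f f hff j i]; simp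
    _ = -((f j)ᴴ * f i * f j) := by rw [mul_assoc]
    _ = f i * (f j)ᴴ * f j := by rw [mixed_fd f hff hffd i j h]; simp
    _ = f i * ((f j)ᴴ * f j) := by rw [mul_assoc]

lemma n_mul_fd_comm {i j : Fin m} (h : j ≠ i) :
    ((f j)ᴴ * f j) * (f i)ᴴ = (f i)ᴴ * ((f j)ᴴ * f j) := by
  have h1 : f j * (f i)ᴴ = -((f i)ᴴ * f j) := by
    have := hffd j i; rw [if_neg h] at this; exact eq_neg_of_add_eq_zero_left this
  calc ((f j)ᴴ * f j) * (f i)ᴴ = (f j)ᴴ * (f j * (f i)ᴴ) := by rw [mul_assoc]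
    _ = -((f j)ᴴ * ((f i)ᴴ * f j)) := by rw [h1]; simp
    _ = -((f j)ᴴ * (f i)ᴴ * f j) := by rw [mul_assoc]
    _ = (f i)ᴴ * (f j)ᴴ * f j := by rw [anti_fd f hff j i]; simp
    _ = (f i)ᴴ * ((f j)ᴴ * f j) := by rw [mul_assoc]

lemma n_mul_f_self (i : Fin m) : ((f i)ᴴ * f i) * f i = 0 := by
  rw [mul_assoc, ff_sq f hff hffd, mul_zero]

lemma f_mul_n_self (i : Fin m) : f i * ((f i)ᴴ * f i) = f i := by
  rw [← mul_assoc, fi_fid f hff hffd, sub_mul, one_mul, mul_assoc, ff_sq f hff hffd,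
    mul_zero, sub_zero]

lemma n_mul_fd_self (i : Fin m) : ((f i)ᴴ * f i) * (f i)ᴴ = (f i)ᴴ := by
  rw [mul_assoc, fi_fid f hff hffd, mul_sub, mul_one, ← mul_assoc,
    fdfd_sq f hff hffd, zero_mul, sub_zero]

lemma fd_mul_n_self (i : Fin m) : (f i)ᴴ * ((f i)ᴴ * f i) = 0 := by
  rw [← mul_assoc, fdfd_sq f hff hffd, zero_mul]

lemma n_idem (i : Fin m) : ((f i)ᴴ * f i) * ((f i)ᴴ * f i) = (f i)ᴴ * f i := by
  rw [mul_assoc ((f i)ᴴ) (f i), f_mul_n_self f hff hffd i]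

lemma q_gen (j : Fin m) (p : Fin m × Bool) :
    qOp f j * genOp f p = (if j = p.1 then (-1:ℂ) else 1) • (genOp f p * qOp f j) := by
  obtain ⟨i, b⟩ := p
  by_cases h : j = i
  · subst h
    simp only [if_pos rfl]
    cases b with
    | false =>
      rw [genOp_false]
      have h1 : qOp f j * f j = f j := by
        simp only [qOp, sub_mul, one_mul, smul_mul_assoc, n_mul_f_self f hff hffd]
        simp
      have h2 : f j * qOp f j = -(f j) := by
        simp only [qOp, mul_sub, mul_one, mul_smul_comm, f_mul_n_self f hff hffd]
        module
      rw [h1, h2]; simp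
    | true =>
      rw [genOp_true]
      have h1 : qOp f j * (f j)ᴴ = -((f j)ᴴ) := by
        simp only [qOp, sub_mul, one_mul, smul_mul_assoc, n_mul_fd_self f hff hffd]
        module
      have h2 : (f j)ᴴ * qOp f j = (f j)ᴴ := by
        simp only [qOp, mul_sub, mul_one, mul_smul_comm, fd_mul_n_self f hff hffd]
        simp
      rw [h1, h2]; simp
  · simp only [if_neg h, one_smul]
    cases b with
    | false =>
      rw [genOp_false]
      simp only [qOp, sub_mul, mul_sub, one_mul, mul_one, smul_mul_assoc,
        mul_smul_comm, n_mul_f_comm f hff hffd h]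
    | true =>
      rw [genOp_true]
      simp only [qOp, sub_mul, mul_sub, one_mul, mul_one, smul_mul_assoc,
        mul_smul_comm, n_mul_fd_comm f hff hffd h]

lemma qlist_gen (l : List (Fin m)) (p : Fin m × Bool) :
    (l.map (qOp f)).prod * genOp f p
      = ((-1:ℂ) ^ (l.count p.1)) • (genOp f p * (l.map (qOp f)).prod) := by
  induction l with
  | nil => simp
  | cons j l ih =>
    rw [List.map_cons, List.prod_cons, mul_assoc, ih, mul_smul_comm, ← mul_assoc,
      q_gen f hff hffd j p, smul_mul_assoc, smul_smul, List.count_cons, mul_assoc]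
    congr 1
    by_cases h : p.1 = j
    · subst h
      simp [pow_succ]
    · have hnj : ¬ j = p.1 := fun e => h e.symm
      simp [hnj]

lemma parity_gen (p : Fin m × Bool) :
    parity f * genOp f p = (-1:ℂ) • (genOp f p * parity f) := by
  rw [parity_eq, qlist_gen f hff hffd]
  congr 1
  rw [List.count_eq_one_of_mem (Finset.sort_nodup _ _) (by simp [Finset.mem_sort]), pow_one]

lemma parity_word (l : List (Fin m × Bool)) :
    parity f * (l.map (genOp f)).prod
      = ((-1:ℂ) ^ l.length) • ((l.map (genOp f)).prod * parity f) := by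
  induction l with
  | nil => simp
  | cons x l ih =>
    rw [List.map_cons, List.prod_cons, ← mul_assoc, parity_gen f hff hffd,
      smul_mul_assoc, mul_assoc, ih, mul_smul_comm, smul_smul, List.length_cons,
      pow_succ, ← mul_assoc, mul_comm ((-1:ℂ)^l.length)]

lemma q_comm (i j : Fin m) : qOp f i * qOp f j = qOp f j * qOp f i := by
  by_cases h : i = j
  · rw [h]
  · have hn : ((f j)ᴴ * f j) * ((f i)ᴴ * f i) = ((f i)ᴴ * f i) * ((f j)ᴴ * f j) := by
      calc ((f j)ᴴ * f j) * ((f i)ᴴ * f i)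
          = (((f j)ᴴ * f j) * (f i)ᴴ) * f i := (mul_assoc _ _ _).symm
        _ = ((f i)ᴴ * ((f j)ᴴ * f j)) * f i := by rw [n_mul_fd_comm f hff hffd (fun e => h e.symm)]
        _ = (f i)ᴴ * (((f j)ᴴ * f j) * f i) := mul_assoc _ _ _
        _ = (f i)ᴴ * (f i * ((f j)ᴴ * f j)) := by rw [n_mul_f_comm f hff hffd (fun e => h e.symm)]
        _ = ((f i)ᴴ * f i) * ((f j)ᴴ * f j) := (mul_assoc _ _ _).symm
    show (1 - (2:ℂ) • ((f i)ᴴ * f i)) * (1 - (2:ℂ) • ((f j)ᴴ * f j)) = _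
    exact one_sub_smul_comm _ _ hn.symm

lemma qlist_comm (l : List (Fin m)) (j : Fin m) :
    (l.map (qOp f)).prod * qOp f j = qOp f j * (l.map (qOp f)).prod := by
  induction l with
  | nil => simp
  | cons i l ih => rw [List.map_cons, List.prod_cons, mul_assoc, ih, ← mul_assoc,
      q_comm f hff hffd i j, mul_assoc]

lemma q_sq (j : Fin m) : qOp f j * qOp f j = 1 := by
  simp only [qOp, sub_mul, mul_sub, one_mul, mul_one, smul_mul_assoc, mul_smul_comm,
    smul_smul, n_idem f hff hffd]
  module

lemma qlist_sq (l : List (Fin m)) :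
    (l.map (qOp f)).prod * (l.map (qOp f)).prod = 1 := by
  induction l with
  | nil => simp
  | cons j l ih =>
    rw [List.map_cons, List.prod_cons, mul_assoc, ← mul_assoc ((l.map (qOp f)).prod),
      qlist_comm f hff hffd, mul_assoc, ← mul_assoc, q_sq f hff hffd, one_mul, ih]

lemma parity_sq : parity f * parity f = 1 := qlist_sq f hff hffd _

lemma q_herm (j : Fin m) : (qOp f j)ᴴ = qOp f j := by
  simp only [qOp, conjTranspose_sub, conjTranspose_smul, conjTranspose_one,
    conjTranspose_mul, conjTranspose_conjTranspose]
  norm_num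

lemma qlist_herm (l : List (Fin m)) :
    ((l.map (qOp f)).prod)ᴴ = (l.map (qOp f)).prod := by
  induction l with
  | nil => simp
  | cons j l ih =>
    rw [List.map_cons, List.prod_cons, conjTranspose_mul, ih, q_herm f hff hffd,
      qlist_comm f hff hffd]

lemma parity_herm : (parity f)ᴴ = parity f := qlist_herm f hff hffd _

lemma trace_odd (σ : Mat m) (hσeven : parity f * σ = σ * parity f)
    (l : List (Fin m × Bool)) (hodd : Odd l.length) :
    Matrix.trace (σ * (l.map (genOp f)).prod) = 0 := by
  set h := (l.map (genOp f)).prod with hh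
  have key : Matrix.trace (σ * h) = ((-1:ℂ) ^ l.length) * Matrix.trace (σ * h) := by
    calc Matrix.trace (σ * h)
        = Matrix.trace ((σ * h * parity f) * parity f) := by
          rw [mul_assoc, parity_sq f hff hffd, mul_one]
      _ = Matrix.trace (parity f * (σ * h * parity f)) := (Matrix.trace_mul_comm _ _)
      _ = Matrix.trace (σ * (parity f * h) * parity f) := by
          rw [← mul_assoc, ← mul_assoc, hσeven, mul_assoc σ, ← mul_assoc σ]
      _ = ((-1:ℂ) ^ l.length) * Matrix.trace (σ * h) := by
          rw [parity_word f hff hffd, mul_smul_comm, smul_mul_assoc, Matrix.trace_smul,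
            mul_assoc σ, mul_assoc, parity_sq f hff hffd, mul_one, smul_eq_mul]
  rw [Odd.neg_one_pow hodd] at key
  have : (2:ℂ) * Matrix.trace (σ * h) = 0 := by linear_combination key
  have h2 := mul_eq_zero.mp this
  simpa using h2.resolve_left (by norm_num)

end Parity



lemma isWord_one (f : Fin m → Mat m) : IsWord f 0 (1 : Mat m) := ⟨[], rfl, by simp⟩

lemma isWord_f (f : Fin m → Mat m) (i : Fin m) : IsWord f 1 (f i) :=
  ⟨[(i, false)], rfl, by simp [genOp]⟩

lemma isWord_fd (f : Fin m → Mat m) (i : Fin m) : IsWord f 1 ((f i)ᴴ) :=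
  ⟨[(i, true)], rfl, by simp [genOp]⟩

lemma isWord_mul (f : Fin m → Mat m) {p q : ℕ} {g h : Mat m}
    (hg : IsWord f p g) (hh : IsWord f q h) : IsWord f (p + q) (g * h) := by
  obtain ⟨l1, h1, rfl⟩ := hg
  obtain ⟨l2, h2, rfl⟩ := hh
  exact ⟨l1 ++ l2, by simp [h1, h2], by simp⟩

lemma parity_word' (f : Fin m → Mat m)
    (hff : ∀ i j : Fin m, f i * f j + f j * f i = 0)
    (hffd : ∀ i j : Fin m, f i * (f j)ᴴ + (f j)ᴴ * f i = if i = j then 1 else 0)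
    {p : ℕ} {g : Mat m} (hg : IsWord f p g) :
    parity f * g = ((-1:ℂ) ^ p) • (g * parity f) := by
  obtain ⟨l, hl, rfl⟩ := hg
  rw [parity_word f hff hffd, hl]

/-- The even and odd generator sets on the doubled space. -/
def ESet (f : Fin m → Mat m) (d : ℕ) : Set (Mat2 m) :=
  {Y | ∃ (p q : ℕ) (g h : Mat m), p + q ≤ d ∧ Even q ∧ IsWord f p g ∧ IsWord f q h ∧
    Y = g ⊗ₖ h}

def OSet (f : Fin m → Mat m) (d : ℕ) : Set (Mat2 m) :=
  {Y | ∃ (p q : ℕ) (g h : Mat m), p + q ≤ d ∧ Odd q ∧ IsWord f p g ∧ IsWord f q h ∧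
    Y = (g * parity f) ⊗ₖ h}

def EO (f : Fin m → Mat m) (d : ℕ) : Submodule ℂ (Mat2 m) :=
  Submodule.span ℂ (ESet f d ∪ OSet f d)

lemma EO_mono (f : Fin m → Mat m) {d d' : ℕ} (h : d ≤ d') : EO f d ≤ EO f d' := by
  refine Submodule.span_mono (Set.union_subset_union ?_ ?_) <;>
    rintro Y ⟨p, q, g, hm, hle, rest⟩ <;> exact ⟨p, q, g, hm, by omega, rest⟩

lemma one_mem_EO (f : Fin m → Mat m) : (1 : Mat2 m) ∈ EO f 0 :=
  Submodule.subset_span (Or.inl ⟨0, 0, 1, 1, le_refl _, Even.zero, isWord_one f,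
    isWord_one f, by rw [Matrix.one_kronecker_one]⟩)

lemma EO_mul (f : Fin m → Mat m)
    (hff : ∀ i j : Fin m, f i * f j + f j * f i = 0)
    (hffd : ∀ i j : Fin m, f i * (f j)ᴴ + (f j)ᴴ * f i = if i = j then 1 else 0)
    {d e : ℕ} {x y : Mat2 m} (hx : x ∈ EO f d) (hy : y ∈ EO f e) :
    x * y ∈ EO f (d + e) := by
  refine spanMulMem (fun s hs t ht => ?_) x hx y hy
  rcases hs with ⟨p, q, g, h, hpq, hq, hwg, hwh, rfl⟩ | ⟨p, q, g, h, hpq, hq, hwg, hwh, rfl⟩ <;>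
    rcases ht with ⟨p', q', g', h', hpq', hq', hwg', hwh', rfl⟩ |
      ⟨p', q', g', h', hpq', hq', hwg', hwh', rfl⟩
  · -- E * E
    rw [← Matrix.mul_kronecker_mul]
    exact Submodule.subset_span (Or.inl ⟨p + p', q + q', g * g', h * h', by omega,
      hq.add hq', isWord_mul f hwg hwg', isWord_mul f hwh hwh', rfl⟩)
  · -- E * O
    rw [← Matrix.mul_kronecker_mul, ← mul_assoc]
    exact Submodule.subset_span (Or.inr ⟨p + p', q + q', g * g', h * h', by omega,
      hq.add_odd hq', isWord_mul f hwg hwg', isWord_mul f hwh hwh', rfl⟩)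
  · -- O * E
    rw [← Matrix.mul_kronecker_mul]
    have hc : (g * parity f) * g' = ((-1:ℂ) ^ p') • ((g * g') * parity f) := by
      rw [mul_assoc, parity_word' f hff hffd hwg', mul_smul_comm, mul_assoc]
    rw [hc, Matrix.smul_kronecker]
    exact Submodule.smul_mem _ _ (Submodule.subset_span (Or.inr ⟨p + p', q + q',
      g * g', h * h', by omega, hq.add_even hq', isWord_mul f hwg hwg',
      isWord_mul f hwh hwh', rfl⟩))
  · -- O * O
    rw [← Matrix.mul_kronecker_mul]
    have hc : (g * parity f) * (g' * parity f) = ((-1:ℂ) ^ p') • (g * g') := by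
      rw [mul_assoc, ← mul_assoc (parity f), parity_word' f hff hffd hwg',
        smul_mul_assoc, mul_smul_comm, mul_assoc, parity_sq f hff hffd, mul_one]
    rw [hc, Matrix.smul_kronecker]
    exact Submodule.smul_mem _ _ (Submodule.subset_span (Or.inl ⟨p + p', q + q',
      g * g', h * h', by omega, hq.add_odd hq', isWord_mul f hwg hwg',
      isWord_mul f hwh hwh', rfl⟩))

lemma EO_list (f : Fin m → Mat m)
    (hff : ∀ i j : Fin m, f i * f j + f j * f i = 0)
    (hffd : ∀ i j : Fin m, f i * (f j)ᴴ + (f j)ᴴ * f i = if i = j then 1 else 0) :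
    ∀ L : List (Mat2 m), (∀ x ∈ L, x ∈ EO f 1) → L.prod ∈ EO f L.length := by
  intro L hL
  induction L with
  | nil => exact one_mem_EO f
  | cons x L ih =>
    rw [List.prod_cons, List.length_cons]
    have := EO_mul f hff hffd (hL x (by simp)) (ih (fun y hy => hL y (by simp [hy])))
    simpa [Nat.add_comm] using this

lemma kron_conj (g h : Mat m) : (g ⊗ₖ h)ᴴ = gᴴ ⊗ₖ hᴴ := by
  ext ⟨i, s⟩ ⟨j, t⟩
  simp [Matrix.conjTranspose_apply, Matrix.kroneckerMap_apply, star_mul', mul_comm]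

lemma ptrace2_add (M N : Mat2 m) : ptrace2 (M + N) = ptrace2 M + ptrace2 N := by
  ext i j; simp [ptrace2, Finset.sum_add_distrib]

lemma ptrace2_smul (c : ℂ) (M : Mat2 m) : ptrace2 (c • M) = c • ptrace2 M := by
  ext i j; simp [ptrace2, Finset.mul_sum]

lemma ptrace2_zero : ptrace2 (0 : Mat2 m) = 0 := by
  ext i j; simp [ptrace2]

lemma ptrace2_kron (g h : Mat m) : ptrace2 (g ⊗ₖ h) = (Matrix.trace h) • g := by
  ext i j
  simp [ptrace2, Matrix.kroneckerMap_apply, Matrix.trace, Matrix.diag,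
    Finset.mul_sum, mul_comm]

section ConjU
variable {U : Mat2 m} (hU1 : Uᴴ * U = 1) (hU2 : U * Uᴴ = 1)

include hU2 in
lemma conjU_mul (M N : Mat2 m) :
    Uᴴ * (M * N) * U = (Uᴴ * M * U) * (Uᴴ * N * U) := by
  have h : U * (Uᴴ * (N * U)) = N * U := by rw [← mul_assoc, hU2, one_mul]
  simp only [mul_assoc, h]

include hU1 hU2 in
lemma conjU_prod : ∀ L : List (Mat2 m),
    Uᴴ * L.prod * U = (L.map (fun M => Uᴴ * M * U)).prod := by
  intro L
  induction L with
  | nil => simp [hU1]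
  | cons M L ih => rw [List.prod_cons, conjU_mul hU2, ih, List.map_cons, List.prod_cons]

lemma conjU_conjT (M : Mat2 m) : Uᴴ * Mᴴ * U = (Uᴴ * M * U)ᴴ := by
  rw [conjTranspose_mul, conjTranspose_mul, conjTranspose_conjTranspose, ← mul_assoc]

end ConjU

lemma prodH : ∀ L : List (Mat2 m), (L.prod)ᴴ = (L.reverse.map conjTranspose).prod := by
  intro L
  induction L with
  | nil => simp
  | cons M L ih =>
    rw [List.prod_cons, conjTranspose_mul, List.reverse_cons, List.map_append,
      List.prod_append, ih]
    simp

lemma kron_one_prod (f : Fin m → Mat m) : ∀ l : List (Fin m),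
    ((l.map f).prod) ⊗ₖ (1 : Mat m) = (l.map (aOp f)).prod := by
  intro l
  induction l with
  | nil => simp [Matrix.one_kronecker_one]
  | cons i l ih =>
    rw [List.map_cons, List.prod_cons, List.map_cons, List.prod_cons, ← ih, aOp,
      ← Matrix.mul_kronecker_mul, one_mul]

/-- For even environment states, the span of normally ordered monomials up to any fixed
order `k` is invariant under the Heisenberg-picture map `Φ*`. -/
theorem monSpan_invariant_under_PhiStar (f : Fin m → Mat m)
    (hff : ∀ i j : Fin m, f i * f j + f j * f i = 0)
    (hffd : ∀ i j : Fin m, f i * (f j)ᴴ + (f j)ᴴ * f i = if i = j then 1 else 0)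
    (σ : Mat m) (hσherm : σᴴ = σ) (hσpos : σ.PosSemidef)
    (hσeven : parity f * σ = σ * parity f)
    (A B : Matrix (Fin m) (Fin m) ℂ) (hAB : A * Aᴴ + B * Bᴴ = 1)
    (U : Mat2 m) (hU1 : Uᴴ * U = 1) (hU2 : U * Uᴴ = 1)
    (hUact : ∀ i : Fin m,
      Uᴴ * aOp f i * U = (∑ k, A i k • aOp f k) + (∑ k, B i k • bOp f k))
    (k : ℕ) :
    ∀ X ∈ monSpan f k, PhiStar U σ X ∈ monSpan f k := by
  -- conjugated annihilators lie in EO f 1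
  have haMem : ∀ i, Uᴴ * aOp f i * U ∈ EO f 1 := by
    intro i
    rw [hUact i]
    refine Submodule.add_mem _ (Submodule.sum_mem _ fun j _ => Submodule.smul_mem _ _ ?_)
      (Submodule.sum_mem _ fun j _ => Submodule.smul_mem _ _ ?_)
    · exact Submodule.subset_span (Or.inl ⟨1, 0, f j, 1, le_refl _, Even.zero,
        isWord_f f j, isWord_one f, rfl⟩)
    · exact Submodule.subset_span (Or.inr ⟨0, 1, 1, f j, le_refl _, odd_one,
        isWord_one f, isWord_f f j, by rw [one_mul]; rfl⟩)
  have haMemH : ∀ i, (Uᴴ * aOp f i * U)ᴴ ∈ EO f 1 := by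
    intro i
    rw [hUact i, conjTranspose_add, Matrix.conjTranspose_sum, Matrix.conjTranspose_sum]
    simp only [Matrix.conjTranspose_smul]
    refine Submodule.add_mem _ (Submodule.sum_mem _ fun j _ => Submodule.smul_mem _ _ ?_)
      (Submodule.sum_mem _ fun j _ => Submodule.smul_mem _ _ ?_)
    · have : (aOp f j)ᴴ = (f j)ᴴ ⊗ₖ (1 : Mat m) := by
        rw [aOp, kron_conj, conjTranspose_one]
      rw [this]
      exact Submodule.subset_span (Or.inl ⟨1, 0, (f j)ᴴ, 1, le_refl _, Even.zero,
        isWord_fd f j, isWord_one f, rfl⟩)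
    · have : (bOp f j)ᴴ = parity f ⊗ₖ (f j)ᴴ := by
        rw [bOp, kron_conj, parity_herm f hff hffd]
      rw [this]
      exact Submodule.subset_span (Or.inr ⟨0, 1, 1, (f j)ᴴ, le_refl _, odd_one,
        isWord_one f, isWord_fd f j, by rw [one_mul]⟩)
  -- the partial trace step
  have hPt : ∀ Y ∈ EO f k, ptrace2 (((1 : Mat m) ⊗ₖ σ) * Y) ∈ monSpan f k := by
    intro Y hY
    induction hY using Submodule.span_induction with
    | mem Z hZ =>
      rcases hZ with ⟨p, q, g, h, hpq, hq, hwg, hwh, rfl⟩ | ⟨p, q, g, h, hpq, hq, hwg, hwh, rfl⟩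
      · rw [← Matrix.mul_kronecker_mul, one_mul, ptrace2_kron]
        exact Submodule.smul_mem _ _ (word_mem_monSpan f hff hffd hwg (by omega))
      · rw [← Matrix.mul_kronecker_mul, one_mul, ptrace2_kron]
        obtain ⟨l, hl, rfl⟩ := hwh
        rw [trace_odd f hff hffd σ hσeven l (hl ▸ hq), zero_smul]
        exact Submodule.zero_mem _
    | zero => rw [mul_zero, ptrace2_zero]; exact Submodule.zero_mem _
    | add x y _ _ ihx ihy => rw [mul_add, ptrace2_add]; exact Submodule.add_mem _ ihx ihy
    | smul c x _ ihx => rw [mul_smul_comm, ptrace2_smul]; exact Submodule.smul_mem _ _ ihx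
  -- main induction over monSpan
  intro X hX
  induction hX using Submodule.span_induction with
  | mem X hXg =>
    obtain ⟨I, J, hIJ, rfl⟩ := hXg
    -- the conjugated monomial lies in EO f k
    have hplain : Uᴴ * ((oprod f I) ⊗ₖ (1 : Mat m)) * U ∈ EO f I.card := by
      rw [oprod, kron_one_prod, conjU_prod hU1 hU2, List.map_map]
      have := EO_list f hff hffd ((I.sort (· ≤ ·)).map ((fun M => Uᴴ * M * U) ∘ aOp f))
        (by rintro x hx
            obtain ⟨i, _, rfl⟩ := List.mem_map.mp hx
            exact haMem i)
      simpa using this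
    have hdag : Uᴴ * (((oprod f J)ᴴ) ⊗ₖ (1 : Mat m)) * U ∈ EO f J.card := by
      have e1 : ((oprod f J)ᴴ) ⊗ₖ (1 : Mat m) = (((oprod f J) ⊗ₖ (1 : Mat m)))ᴴ := by
        rw [kron_conj, conjTranspose_one]
      have h2 : Uᴴ * ((oprod f J) ⊗ₖ (1 : Mat m)) * U
          = ((J.sort (· ≤ ·)).map ((fun M => Uᴴ * M * U) ∘ aOp f)).prod := by
        rw [oprod, kron_one_prod, conjU_prod hU1 hU2, List.map_map]
      rw [e1, conjU_conjT, h2, prodH]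
      have := EO_list f hff hffd
        ((((J.sort (· ≤ ·)).map ((fun M => Uᴴ * M * U) ∘ aOp f)).reverse).map conjTranspose)
        (by rintro x hx
            obtain ⟨y, hy, rfl⟩ := List.mem_map.mp hx
            obtain ⟨i, _, rfl⟩ := List.mem_map.mp (List.mem_reverse.mp hy)
            exact haMemH i)
      simpa using this
    have hXY : Uᴴ * (((oprod f J)ᴴ * oprod f I) ⊗ₖ (1 : Mat m)) * U
        = (Uᴴ * (((oprod f J)ᴴ) ⊗ₖ (1 : Mat m)) * U) * (Uᴴ * ((oprod f I) ⊗ₖ (1 : Mat m)) * U) := by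
      rw [show ((oprod f J)ᴴ * oprod f I) ⊗ₖ (1 : Mat m)
          = (((oprod f J)ᴴ) ⊗ₖ (1 : Mat m)) * ((oprod f I) ⊗ₖ (1 : Mat m)) from by
        rw [← Matrix.mul_kronecker_mul, one_mul], conjU_mul hU2]
    have hY : Uᴴ * (((oprod f J)ᴴ * oprod f I) ⊗ₖ (1 : Mat m)) * U ∈ EO f k := by
      rw [hXY]
      exact EO_mono f (by omega) (EO_mul f hff hffd hdag hplain)
    have hassoc : ((1 : Mat m) ⊗ₖ σ) * Uᴴ * ((((oprod f J)ᴴ * oprod f I)) ⊗ₖ (1 : Mat m)) * U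
        = ((1 : Mat m) ⊗ₖ σ) * (Uᴴ * (((oprod f J)ᴴ * oprod f I) ⊗ₖ (1 : Mat m)) * U) := by
      simp only [mul_assoc]
    rw [PhiStar, hassoc]
    exact hPt _ hY
  | zero => simp [PhiStar, Matrix.zero_kronecker, ptrace2_zero]
  | add x y _ _ ihx ihy =>
    have : PhiStar U σ (x + y) = PhiStar U σ x + PhiStar U σ y := by
      rw [PhiStar, PhiStar, PhiStar, Matrix.add_kronecker, mul_add, add_mul, ptrace2_add]
    rw [this]; exact Submodule.add_mem _ ihx ihy
  | smul c x _ ihx =>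
    have : PhiStar U σ (c • x) = c • PhiStar U σ x := by
      rw [PhiStar, PhiStar, Matrix.smul_kronecker, mul_smul_comm, smul_mul_assoc,
        ptrace2_smul]
    rw [this]; exact Submodule.smul_mem _ _ ihx



end
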